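/- arXiv:2008.11072 — 7 statements merged into one kernel-verified Lean document; each statement's English description precedes it below -/
import Mathlib

section
/- Let (X, d) be a metric space with diam(X) ≤ K for some constant K > 0, let θ ∈ (0,1), C > 0 and κ > 0, and let Φ'_n, Φ''_n : X → X (n ≥ 1) be two families of maps such that d(Φ'_n(x₁), Φ'_n(x₂)) ≤ θ d(x₁, x₂) and d(Φ''_n(x₁), Φ''_n(x₂)) ≤ θ d(x₁, x₂) for all x₁, x₂ ∈ X and all n, and d(Φ'_n(x), Φ''_n(x)) ≤ C/n^κ for all x ∈ X and all n. Then there exists a constant C̄ (depending only on K, θ, C, κ) such that for all n ≥ 1 and all x', x'' ∈ X: d(Φ'_n ∘ Φ'_{n−1} ∘ ⋯ ∘ Φ'_1(x'), Φ''_n ∘ Φ''_{n−1} ∘ ⋯ ∘ Φ''_1(x'')) ≤ C̄/n^κ. -/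
/-- The composition `Φ_n ∘ Φ_{n-1} ∘ ⋯ ∘ Φ_1` (the empty composition is the identity). -/
def iterComp {X : Type*} (Φ : ℕ → X → X) : ℕ → X → X
  | 0 => id
  | n + 1 => Φ (n + 1) ∘ iterComp Φ n

/-!
For the distance `d_N` between the two `N`-fold compositions, unrolling
`d_{N+1} ≤ θ d_N + C/(N+1)^κ` gives
`d_n ≤ θ^n d_0 + C ∑_{j<n} θ^j/(n-j)^κ`. Since `n ≤ (j+1)(n-j)` for `j < n`, the `j`-th term is
at most `(j+1)^κ θ^j / n^κ`, so the whole bound is `(K + C) S / n^κ` with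
`S = ∑_j (j+1)^κ θ^j`, a series that converges because `θ < 1`.
-/

open Finset

lemma summable_add_one_pow_mul_geometric (m : ℕ) {r : ℝ} (hr : ‖r‖ < 1) :
    Summable fun j : ℕ => ((j : ℝ) + 1) ^ m * r ^ j := by
  simp_rw [add_pow, one_pow, mul_one, sum_mul]
  refine summable_sum fun i _ => ?_
  exact ((summable_pow_mul_geometric_of_norm_lt_one i hr).mul_left (m.choose i : ℝ)).congr
    fun j => by ring

lemma summable_add_one_rpow_mul_geometric (κ : ℝ) {r : ℝ} (hr : ‖r‖ < 1) :
    Summable fun j : ℕ => ((j : ℝ) + 1) ^ κ * r ^ j := by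
  refine .of_norm_bounded
    (summable_add_one_pow_mul_geometric ⌈κ⌉₊ (r := ‖r‖) (by rwa [norm_norm])) fun j => ?_
  rw [norm_mul, norm_pow, Real.norm_of_nonneg (by positivity)]
  gcongr
  rw [← Real.rpow_natCast]
  exact Real.rpow_le_rpow_of_exponent_le (by simp) (Nat.le_ceil κ)

lemma dist_iterComp_le {X : Type*} [PseudoMetricSpace X] {Φ' Φ'' : ℕ → X → X} {θ : ℝ}
    {ε : ℕ → ℝ} (hθ : 0 ≤ θ)
    (hΦ' : ∀ n, 1 ≤ n → ∀ x₁ x₂, dist (Φ' n x₁) (Φ' n x₂) ≤ θ * dist x₁ x₂)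
    (hΦ : ∀ n, 1 ≤ n → ∀ x, dist (Φ' n x) (Φ'' n x) ≤ ε n) (x' x'' : X) (N : ℕ) :
    dist (iterComp Φ' N x') (iterComp Φ'' N x'') ≤
      θ ^ N * dist x' x'' + ∑ j ∈ range N, θ ^ j * ε (N - j) := by
  induction N with
  | zero => simp [iterComp]
  | succ N ih =>
    have step : dist (iterComp Φ' (N + 1) x') (iterComp Φ'' (N + 1) x'') ≤
        θ * dist (iterComp Φ' N x') (iterComp Φ'' N x'') + ε (N + 1) :=
      (dist_triangle _ (Φ' (N + 1) (iterComp Φ'' N x'')) _).trans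
        (add_le_add (hΦ' _ N.succ_pos _ _) (hΦ _ N.succ_pos _))
    calc _ ≤ θ * (θ ^ N * dist x' x'' + ∑ j ∈ range N, θ ^ j * ε (N - j)) + ε (N + 1) :=
          step.trans (by gcongr)
      _ = _ := by
          rw [sum_range_succ', mul_add, mul_sum]
          simp only [pow_succ', mul_assoc, Nat.add_sub_add_right, pow_zero, one_mul, Nat.sub_zero]
          ring

lemma sum_geometric_div_rpow_le {θ κ : ℝ} (hθ : 0 ≤ θ) (hθ1 : θ < 1) (hκ : 0 ≤ κ) (n : ℕ) :
    ∑ j ∈ range n, θ ^ j / ((n - j : ℕ) : ℝ) ^ κ ≤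
      (∑' j : ℕ, ((j : ℝ) + 1) ^ κ * θ ^ j) / (n : ℝ) ^ κ := by
  calc ∑ j ∈ range n, θ ^ j / ((n - j : ℕ) : ℝ) ^ κ
      ≤ ∑ j ∈ range n, ((j : ℝ) + 1) ^ κ * θ ^ j / (n : ℝ) ^ κ := by
        refine sum_le_sum fun j hj => ?_
        obtain ⟨m, rfl⟩ := Nat.exists_eq_add_of_lt (mem_range.mp hj)
        have hnm : ((j + m + 1 : ℕ) : ℝ) ≤ ((j : ℝ) + 1) * ((m : ℝ) + 1) := by
          push_cast; nlinarith [(j.cast_nonneg : (0 : ℝ) ≤ j), (m.cast_nonneg : (0 : ℝ) ≤ m)]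
        rw [show j + m + 1 - j = m + 1 by omega, div_le_div_iff₀ (by positivity) (by positivity)]
        calc θ ^ j * ((j + m + 1 : ℕ) : ℝ) ^ κ
            ≤ θ ^ j * (((j : ℝ) + 1) * ((m : ℝ) + 1)) ^ κ := by gcongr
          _ = ((j : ℝ) + 1) ^ κ * θ ^ j * ((m + 1 : ℕ) : ℝ) ^ κ := by
            rw [Real.mul_rpow (by positivity) (by positivity)]; push_cast; ring
    _ = (∑ j ∈ range n, ((j : ℝ) + 1) ^ κ * θ ^ j) / (n : ℝ) ^ κ := (sum_div ..).symm
    _ ≤ _ := by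
        gcongr
        exact (summable_add_one_rpow_mul_geometric κ (by rwa [Real.norm_of_nonneg hθ])).sum_le_tsum
          _ fun j _ => by positivity

lemma pow_le_tsum_div_rpow {θ κ : ℝ} (hθ : 0 ≤ θ) (hθ1 : θ < 1) (hκ : 0 ≤ κ) {n : ℕ}
    (hn : 1 ≤ n) : θ ^ n ≤ (∑' j : ℕ, ((j : ℝ) + 1) ^ κ * θ ^ j) / (n : ℝ) ^ κ := by
  rw [le_div_iff₀ (by positivity)]
  calc θ ^ n * (n : ℝ) ^ κ ≤ ((n : ℝ) + 1) ^ κ * θ ^ n := by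
        rw [mul_comm]; gcongr; linarith
    _ ≤ _ := (summable_add_one_rpow_mul_geometric κ (by rwa [Real.norm_of_nonneg hθ])).le_tsum n
        fun j _ => by positivity

theorem contraction_composition_stability_general (K θ C κ : ℝ)
    (hθ0 : 0 < θ) (hθ1 : θ < 1) (hC : 0 < C) (hκ : 0 < κ) :
    ∃ Cbar : ℝ,
      ∀ (X : Type) (_ : MetricSpace X),
        (∀ x y : X, dist x y ≤ K) →
        ∀ Φ' Φ'' : ℕ → X → X,
          (∀ n : ℕ, 1 ≤ n → ∀ x₁ x₂ : X, dist (Φ' n x₁) (Φ' n x₂) ≤ θ * dist x₁ x₂) →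
          (∀ n : ℕ, 1 ≤ n → ∀ x₁ x₂ : X, dist (Φ'' n x₁) (Φ'' n x₂) ≤ θ * dist x₁ x₂) →
          (∀ n : ℕ, 1 ≤ n → ∀ x : X, dist (Φ' n x) (Φ'' n x) ≤ C / (n : ℝ) ^ κ) →
          ∀ n : ℕ, 1 ≤ n → ∀ x' x'' : X,
            dist (iterComp Φ' n x') (iterComp Φ'' n x'') ≤ Cbar / (n : ℝ) ^ κ := by
  set S := ∑' j : ℕ, ((j : ℝ) + 1) ^ κ * θ ^ j
  refine ⟨(K + C) * S, fun X _ hdiam Φ' Φ'' hΦ' _ hΦ n hn x' x'' => ?_⟩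
  calc dist (iterComp Φ' n x') (iterComp Φ'' n x'')
      ≤ θ ^ n * dist x' x'' + ∑ j ∈ range n, θ ^ j * (C / ((n - j : ℕ) : ℝ) ^ κ) :=
        dist_iterComp_le hθ0.le hΦ' hΦ x' x'' n
    _ = θ ^ n * dist x' x'' + C * ∑ j ∈ range n, θ ^ j / ((n - j : ℕ) : ℝ) ^ κ := by
        simp only [mul_sum, mul_div_left_comm]
    _ ≤ S / (n : ℝ) ^ κ * K + C * (S / (n : ℝ) ^ κ) := by
        gcongr
        · exact pow_le_tsum_div_rpow hθ0.le hθ1 hκ.le hn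
        · exact hdiam x' x''
        · exact sum_geometric_div_rpow_le hθ0.le hθ1 hκ.le n
    _ = (K + C) * S / (n : ℝ) ^ κ := by ring

/-- Stability of compositions of contractions under slowly decaying
perturbations (Proposition C.7). -/
theorem contraction_composition_stability (K θ C κ : ℝ)
    (hK : 0 < K) (hθ0 : 0 < θ) (hθ1 : θ < 1) (hC : 0 < C) (hκ : 0 < κ) :
    ∃ Cbar : ℝ,
      ∀ (X : Type) (_ : MetricSpace X),
        (∀ x y : X, dist x y ≤ K) →
        ∀ Φ' Φ'' : ℕ → X → X,
          (∀ n : ℕ, 1 ≤ n → ∀ x₁ x₂ : X, dist (Φ' n x₁) (Φ' n x₂) ≤ θ * dist x₁ x₂) →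
          (∀ n : ℕ, 1 ≤ n → ∀ x₁ x₂ : X, dist (Φ'' n x₁) (Φ'' n x₂) ≤ θ * dist x₁ x₂) →
          (∀ n : ℕ, 1 ≤ n → ∀ x : X, dist (Φ' n x) (Φ'' n x) ≤ C / (n : ℝ) ^ κ) →
          ∀ n : ℕ, 1 ≤ n → ∀ x' x'' : X,
            dist (iterComp Φ' n x') (iterComp Φ'' n x'') ≤ Cbar / (n : ℝ) ^ κ :=
  contraction_composition_stability_general K θ C κ hθ0 hθ1 hC hκ
end

section
/- Fix an integer m ≥ 1 and ε̄ > 0. Let (A_n)_{n∈ℤ} be a sequence of m×m matrices with A_n(i,j) ≥ ε̄ for all i,j and ‖A_n‖ ≤ (m ε̄)^{−1} for all n, where ‖A‖ = max_i Σ_j |A(i,j)|. Then there exist nonnegative vectors v_n ∈ ℝ^m with ‖v_n‖ = 1, and constants C > 0, θ ∈ (0,1), such that for every pair of integers a < n and every nonnegative vector ṽ ∈ ℝ^m with ‖ṽ‖ = 1, one has ‖ v_n − (A_n A_{n−1} ⋯ A_{a+1} ṽ)/‖A_n A_{n−1} ⋯ A_{a+1} ṽ‖ ‖ ≤ C θ^{n−a}.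 In particular, the limit v_n = lim_{a→−∞} (A_n ⋯ A_{a+1} ṽ_a)/‖A_n ⋯ A_{a+1} ṽ_a‖ exists and is independent of any choice of nonnegative unit vectors ṽ_a. -/
/-!
Every `A n` has each entry at least `c = m ε̄²` times its row sum. For such a matrix `B`, a
vector `y ≥ 0` whose largest coordinate is `y j`, and any `z ≥ 0`, one has
`c z_j (B y)_i ≤ y_j (B z)_i`. Applied to `z = x - s y` and `z = r y - x`, this shows that a
sandwich `s y ≤ x ≤ r y` is carried by `B` to a sandwich `s' B y ≤ B x ≤ r' B y` with
`r' - s' = (1 - c)(r - s)`. After one step any two nonnegative unit vectors are sandwiched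
with `s = c` and `r = c⁻¹`, so the directions of `A_{a+k} ⋯ A_{a+1} w` and
`A_{a+k} ⋯ A_{a+1} w'` differ by `O((1 - c)^k)`. Hence, as `a → -∞`, the directions of
`A_n ⋯ A_{a+1} u` form a Cauchy sequence, and its limit is `v n`.
-/

open Filter

/-- `prodApply A a k v = A_{a+k} ⋯ A_{a+1} v`. -/
def prodApply {m : ℕ} (A : ℤ → Matrix (Fin m) (Fin m) ℝ) (a : ℤ) :
    ℕ → (Fin m → ℝ) → (Fin m → ℝ)
  | 0, v => v
  | k + 1, v => (A (a + k + 1)).mulVec (prodApply A a k v)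

open Matrix Topology

section MatrixVector

variable {ι : Type*} [Fintype ι]

theorem mulVec_le_rowSum_mul {B : Matrix ι ι ℝ} (hB : ∀ i j, 0 ≤ B i j) {y : ι → ℝ} {Y : ℝ}
    (hy : ∀ k, y k ≤ Y) (i : ι) : (B *ᵥ y) i ≤ (∑ k, B i k) * Y := by
  rw [Finset.sum_mul]
  exact Finset.sum_le_sum fun k _ => mul_le_mul_of_nonneg_left (hy k) (hB i k)

theorem mul_le_mulVec {B : Matrix ι ι ℝ} (hB : ∀ i j, 0 ≤ B i j) {z : ι → ℝ} (hz : 0 ≤ z)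
    (i j : ι) : B i j * z j ≤ (B *ᵥ z) i :=
  Finset.single_le_sum (f := fun k => B i k * z k) (fun k _ => mul_nonneg (hB i k) (hz k))
    (Finset.mem_univ j)

theorem mulVec_pos {B : Matrix ι ι ℝ} (hB : ∀ i j, 0 < B i j) {z : ι → ℝ} (hz : 0 ≤ z)
    (hz0 : z ≠ 0) (i : ι) : 0 < (B *ᵥ z) i := by
  obtain ⟨j, hj⟩ := Function.ne_iff.1 hz0
  exact (mul_pos (hB i j) (lt_of_le_of_ne (hz j) hj.symm)).trans_le
    (mul_le_mulVec (fun i j => (hB i j).le) hz i j)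

theorem apply_le_norm (y : ι → ℝ) (k : ι) : y k ≤ ‖y‖ :=
  (le_abs_self _).trans (norm_le_pi_norm y k)

theorem exists_apply_eq_norm [Nonempty ι] {y : ι → ℝ} (hy : 0 ≤ y) : ∃ j, y j = ‖y‖ := by
  obtain ⟨j, hj⟩ := (IsGreatest.pi_norm y).1
  exact ⟨j, by rw [← hj]; exact (Real.norm_of_nonneg (hy j)).symm⟩

end MatrixVector

section Doeblin

variable {ι : Type*} [Fintype ι]

/-- After the rows of `B` are normalized to probability vectors, this is Doeblin's minorization
condition with respect to `c` times the counting measure. -/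
def IsDoeblin (c : ℝ) (B : Matrix ι ι ℝ) : Prop :=
  ∀ i j, c * ∑ k, B i k ≤ B i j

theorem isDoeblin_of_le_of_rowSum_le {B : Matrix ι ι ℝ} {ε R : ℝ} (hε : 0 ≤ ε) (hR : 0 < R)
    (hB : ∀ i j, ε ≤ B i j) (hrow : ∀ i, ∑ j, B i j ≤ R) : IsDoeblin (ε / R) B := fun i j =>
  calc ε / R * ∑ k, B i k ≤ ε / R * R := by gcongr; exact hrow i
    _ = ε := div_mul_cancel₀ ε hR.ne'
    _ ≤ B i j := hB i j

namespace IsDoeblin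

variable {B : Matrix ι ι ℝ} {c : ℝ}

theorem mono (hB : ∀ i j, 0 ≤ B i j) (h : IsDoeblin c B) {c' : ℝ} (hc' : c' ≤ c) :
    IsDoeblin c' B := fun i j =>
  (mul_le_mul_of_nonneg_right hc' (Finset.sum_nonneg fun k _ => hB i k)).trans (h i j)

theorem le_one [Nonempty ι] (hB : ∀ i j, 0 < B i j) (h : IsDoeblin c B) : c ≤ 1 := by
  obtain ⟨i⟩ := ‹Nonempty ι›
  have hrow : 0 < ∑ k, B i k := Finset.sum_pos (fun k _ => hB i k) Finset.univ_nonempty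
  refine le_of_mul_le_mul_right ?_ hrow
  rw [one_mul]
  exact (h i i).trans (Finset.single_le_sum (fun k _ => (hB i k).le) (Finset.mem_univ i))

theorem mul_mulVec_le (hB : ∀ i j, 0 ≤ B i j) (h : IsDoeblin c B) (hc : 0 ≤ c) {y z : ι → ℝ}
    {Y : ℝ} (hY : 0 ≤ Y) (hy : ∀ k, y k ≤ Y) (hz : 0 ≤ z) (i j : ι) :
    c * z j * (B *ᵥ y) i ≤ Y * (B *ᵥ z) i :=
  calc c * z j * (B *ᵥ y) i ≤ c * z j * ((∑ k, B i k) * Y) :=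
        mul_le_mul_of_nonneg_left (mulVec_le_rowSum_mul hB hy i) (mul_nonneg hc (hz j))
    _ = Y * z j * (c * ∑ k, B i k) := by ring
    _ ≤ Y * z j * B i j := mul_le_mul_of_nonneg_left (h i j) (mul_nonneg hY (hz j))
    _ = Y * (B i j * z j) := by ring
    _ ≤ Y * (B *ᵥ z) i := mul_le_mul_of_nonneg_left (mul_le_mulVec hB hz i j) hY

theorem smul_mulVec_le (hB : ∀ i j, 0 ≤ B i j) (h : IsDoeblin c B) (hc : 0 ≤ c)
    {w w' : ι → ℝ} (hw : 0 ≤ w) (hw1 : ‖w‖ = 1) (hw'1 : ‖w'‖ = 1) :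
    c • (B *ᵥ w') ≤ B *ᵥ w := by
  intro i
  have hw0 : w ≠ 0 := ne_zero_of_norm_ne_zero (by rw [hw1]; exact one_ne_zero)
  have : Nonempty ι := (Function.ne_iff.1 hw0).nonempty
  obtain ⟨j, hj⟩ := exists_apply_eq_norm hw
  have key := h.mul_mulVec_le hB hc zero_le_one (fun k => hw'1 ▸ apply_le_norm w' k) hw i j
  rwa [hj, hw1, mul_one, one_mul] at key

theorem exists_sandwich_mulVec (hB : ∀ i j, 0 ≤ B i j) (h : IsDoeblin c B) (hc : 0 ≤ c)
    {x y : ι → ℝ} (hy : 0 ≤ y) (hy0 : y ≠ 0) {s r : ℝ} (hsx : s • y ≤ x) (hxr : x ≤ r • y) :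
    ∃ s' r', s ≤ s' ∧ s' • (B *ᵥ y) ≤ B *ᵥ x ∧ B *ᵥ x ≤ r' • (B *ᵥ y) ∧
      r' - s' = (1 - c) * (r - s) := by
  have : Nonempty ι := (Function.ne_iff.1 hy0).nonempty
  obtain ⟨j, hj⟩ := exists_apply_eq_norm hy
  have hyj : 0 < y j := hj ▸ norm_pos_iff.2 hy0
  have hyk : ∀ k, y k ≤ y j := fun k => hj ▸ apply_le_norm y k
  set t := x j / y j
  have hxj : x j = t * y j := (div_mul_cancel₀ _ hyj.ne').symm
  have hst : s ≤ t := (le_div_iff₀ hyj).2 (hsx j)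
  refine ⟨s + c * (t - s), r - c * (r - t), by nlinarith, fun i => ?_, fun i => ?_, by ring⟩
  · have key := h.mul_mulVec_le hB hc hyj.le hyk (sub_nonneg.2 hsx) i j
    simp only [mulVec_sub, mulVec_smul, Pi.sub_apply, Pi.smul_apply, smul_eq_mul, hxj] at key ⊢
    nlinarith
  · have key := h.mul_mulVec_le hB hc hyj.le hyk (sub_nonneg.2 hxr) i j
    simp only [mulVec_sub, mulVec_smul, Pi.sub_apply, Pi.smul_apply, smul_eq_mul, hxj] at key ⊢
    nlinarith

end IsDoeblin

end Doeblin

section Normalize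

variable {ι : Type*} [Fintype ι]

def nonnegUnitSphere (ι : Type*) [Fintype ι] : Set (ι → ℝ) :=
  {w | 0 ≤ w ∧ ‖w‖ = 1}

theorem isClosed_nonnegUnitSphere : IsClosed (nonnegUnitSphere ι) :=
  isClosed_Ici.inter (isClosed_eq continuous_norm continuous_const)

theorem nonnegUnitSphere_nonempty [Nonempty ι] : (nonnegUnitSphere ι).Nonempty :=
  ⟨fun _ => 1, fun _ => zero_le_one, by simp⟩

theorem ne_zero_of_mem_nonnegUnitSphere {w : ι → ℝ} (hw : w ∈ nonnegUnitSphere ι) : w ≠ 0 :=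
  ne_zero_of_norm_ne_zero (by rw [hw.2]; exact one_ne_zero)

theorem norm_sub_le_one_of_mem_nonnegUnitSphere {w w' : ι → ℝ} (hw : w ∈ nonnegUnitSphere ι)
    (hw' : w' ∈ nonnegUnitSphere ι) : ‖w - w'‖ ≤ 1 :=
  (pi_norm_le_iff_of_nonneg zero_le_one).2 fun i =>
    abs_sub_le_of_nonneg_of_le (hw.1 i) (hw.2 ▸ apply_le_norm w i) (hw'.1 i)
      (hw'.2 ▸ apply_le_norm w' i)

theorem inv_norm_smul_mem_nonnegUnitSphere {x : ι → ℝ} (hx : 0 ≤ x) (hx0 : x ≠ 0) :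
    ‖x‖⁻¹ • x ∈ nonnegUnitSphere ι :=
  ⟨smul_nonneg (inv_nonneg.2 (norm_nonneg x)) hx, norm_smul_inv_norm hx0⟩

theorem inv_norm_smul_smul {E : Type*} [NormedAddCommGroup E] [NormedSpace ℝ E] {t : ℝ}
    (ht : 0 < t) (z : E) : ‖t • z‖⁻¹ • t • z = ‖z‖⁻¹ • z := by
  rw [norm_smul, Real.norm_of_nonneg ht.le, smul_smul]
  congr 1
  field_simp

theorem norm_inv_norm_smul_sub_le {x y : ι → ℝ} (hy : 0 ≤ y) (hy0 : y ≠ 0) {s r : ℝ}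
    (hs : 0 < s) (hsx : s • y ≤ x) (hxr : x ≤ r • y) :
    ‖‖x‖⁻¹ • x - ‖y‖⁻¹ • y‖ ≤ (r - s) / s := by
  have : Nonempty ι := (Function.ne_iff.1 hy0).nonempty
  have hsx' : ∀ i, s * y i ≤ x i := hsx
  have hxr' : ∀ i, x i ≤ r * y i := hxr
  have hx : 0 ≤ x := fun i => (mul_nonneg hs.le (hy i)).trans (hsx' i)
  obtain ⟨jy, hjy⟩ := exists_apply_eq_norm hy
  obtain ⟨jx, hjx⟩ := exists_apply_eq_norm hx
  set X := ‖x‖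
  set Y := ‖y‖
  have hY : 0 < Y := norm_pos_iff.2 hy0
  have hsY : s * Y ≤ X := hjy ▸ (hsx' jy).trans (apply_le_norm x jy)
  have hX : 0 < X := (mul_pos hs hY).trans_le hsY
  have hsr : s ≤ r := le_of_mul_le_mul_right (hjy ▸ (hsx' jy).trans (hxr' jy)) hY
  have hXsY : X - s * Y ≤ (r - s) * Y := by
    nlinarith [hxr' jx, apply_le_norm y jx]
  refine (pi_norm_le_iff_of_nonneg (div_nonneg (sub_nonneg.2 hsr) hs.le)).2 fun i => ?_
  have hyi := apply_le_norm y i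
  have hxi := apply_le_norm x i
  have h1 : s * (x i * Y - X * y i) ≤ (r - s) * (X * Y) := by
    nlinarith [mul_le_mul_of_nonneg_left (hxr' i) (mul_nonneg hs.le hY.le),
      mul_le_mul_of_nonneg_left hsY (mul_nonneg (sub_nonneg.2 hsr) (hy i)),
      mul_le_mul_of_nonneg_left hyi (mul_nonneg (sub_nonneg.2 hsr) hX.le),
      mul_le_mul_of_nonneg_left hsY (mul_nonneg hs.le (hy i))]
  have h2 : s * (X * y i - x i * Y) ≤ (r - s) * (X * Y) := by
    nlinarith [mul_le_mul_of_nonneg_left (hsx' i) (mul_nonneg hs.le hY.le),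
      mul_le_mul_of_nonneg_left hXsY (mul_nonneg hs.le (hy i)),
      mul_le_mul_of_nonneg_left ((hsx' i).trans hxi) (mul_nonneg (sub_nonneg.2 hsr) hY.le)]
  have hcomp : (X⁻¹ • x - Y⁻¹ • y) i = (x i * Y - X * y i) / (X * Y) := by
    simp only [Pi.sub_apply, Pi.smul_apply, smul_eq_mul]
    field_simp
  rw [Real.norm_eq_abs, hcomp, abs_div, abs_of_pos (mul_pos hX hY),
    div_le_div_iff₀ (mul_pos hX hY) hs]
  rcases abs_cases (x i * Y - X * y i) with ⟨h, -⟩ | ⟨h, -⟩ <;> rw [h] <;> linarith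

end Normalize

section ProdApply

variable {m : ℕ} {A : ℤ → Matrix (Fin m) (Fin m) ℝ}

theorem prodApply_smul (a : ℤ) (k : ℕ) (t : ℝ) (v : Fin m → ℝ) :
    prodApply A a k (t • v) = t • prodApply A a k v := by
  induction k with
  | zero => rfl
  | succ k ih => rw [prodApply, prodApply, ih, mulVec_smul]

theorem prodApply_add (a : ℤ) (j k : ℕ) (v : Fin m → ℝ) :
    prodApply A a (j + k) v = prodApply A (a + j) k (prodApply A a j v) := by
  induction k with
  | zero => rfl
  | succ k ih =>
    rw [← add_assoc, prodApply, prodApply, ih]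
    congr 2
    push_cast
    ring

theorem prodApply_nonneg_ne_zero (hA : ∀ n i j, 0 < A n i j) (a : ℤ) {w : Fin m → ℝ}
    (hw : 0 ≤ w) (hw0 : w ≠ 0) (k : ℕ) : 0 ≤ prodApply A a k w ∧ prodApply A a k w ≠ 0 := by
  induction k with
  | zero => exact ⟨hw, hw0⟩
  | succ k ih =>
    obtain ⟨i₀, -⟩ := Function.ne_iff.1 ih.2
    have hpos := mulVec_pos (hA (a + k + 1)) ih.1 ih.2
    exact ⟨fun i => (hpos i).le, Function.ne_iff.2 ⟨i₀, (hpos i₀).ne'⟩⟩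

theorem inv_norm_smul_prodApply_add (hA : ∀ n i j, 0 < A n i j) (a : ℤ) (j k : ℕ)
    {w : Fin m → ℝ} (hw : 0 ≤ w) (hw0 : w ≠ 0) :
    ‖prodApply A a (j + k) w‖⁻¹ • prodApply A a (j + k) w =
      ‖prodApply A (a + j) k (‖prodApply A a j w‖⁻¹ • prodApply A a j w)‖⁻¹ •
        prodApply A (a + j) k (‖prodApply A a j w‖⁻¹ • prodApply A a j w) := by
  have hpos : 0 < ‖prodApply A a j w‖⁻¹ :=
    inv_pos.2 (norm_pos_iff.2 (prodApply_nonneg_ne_zero hA a hw hw0 j).2)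
  rw [prodApply_smul, inv_norm_smul_smul hpos, prodApply_add]

theorem inv_norm_smul_prodApply_mem_nonnegUnitSphere (hA : ∀ n i j, 0 < A n i j) (a : ℤ)
    (k : ℕ) {w : Fin m → ℝ} (hw : w ∈ nonnegUnitSphere (Fin m)) :
    ‖prodApply A a k w‖⁻¹ • prodApply A a k w ∈ nonnegUnitSphere (Fin m) :=
  have h := prodApply_nonneg_ne_zero hA a hw.1 (ne_zero_of_mem_nonnegUnitSphere hw) k
  inv_norm_smul_mem_nonnegUnitSphere h.1 h.2

variable {c : ℝ}

theorem exists_sandwich_prodApply (hA : ∀ n i j, 0 < A n i j) (hc : ∀ n, IsDoeblin c (A n))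
    (hc0 : 0 < c) (hc1 : c ≤ 1) {w w' : Fin m → ℝ} (hw : w ∈ nonnegUnitSphere (Fin m))
    (hw' : w' ∈ nonnegUnitSphere (Fin m)) (a : ℤ) (k : ℕ) :
    ∃ s r, c ≤ s ∧ s • prodApply A a (k + 1) w' ≤ prodApply A a (k + 1) w ∧
      prodApply A a (k + 1) w ≤ r • prodApply A a (k + 1) w' ∧ r - s ≤ c⁻¹ * (1 - c) ^ k := by
  have hA' : ∀ n i j, 0 ≤ A n i j := fun n i j => (hA n i j).le
  induction k with
  | zero =>
    have hlo := (hc (a + 0 + 1)).smul_mulVec_le (hA' _) hc0.le hw.1 hw.2 hw'.2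
    have hhi := (hc (a + 0 + 1)).smul_mulVec_le (hA' _) hc0.le hw'.1 hw'.2 hw.2
    refine ⟨c, c⁻¹, le_rfl, hlo, fun i => ?_, by simpa using hc0.le⟩
    rw [Pi.smul_apply, smul_eq_mul, le_inv_mul_iff₀ hc0]
    exact hhi i
  | succ k ih =>
    obtain ⟨s, r, hcs, hsx, hxr, hgap⟩ := ih
    obtain ⟨hy, hy0⟩ :=
      prodApply_nonneg_ne_zero hA a hw'.1 (ne_zero_of_mem_nonnegUnitSphere hw') (k + 1)
    obtain ⟨s', r', hss', hsx', hxr', hgap'⟩ :=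
      (hc (a + ↑(k + 1) + 1)).exists_sandwich_mulVec (hA' _) hc0.le hy hy0 hsx hxr
    refine ⟨s', r', hcs.trans hss', hsx', hxr', ?_⟩
    calc r' - s' = (1 - c) * (r - s) := hgap'
      _ ≤ (1 - c) * (c⁻¹ * (1 - c) ^ k) := mul_le_mul_of_nonneg_left hgap (sub_nonneg.2 hc1)
      _ = c⁻¹ * (1 - c) ^ (k + 1) := by ring

theorem norm_inv_norm_smul_prodApply_sub_le (hA : ∀ n i j, 0 < A n i j)
    (hc : ∀ n, IsDoeblin c (A n)) (hc0 : 0 < c) (hc1 : c < 1) (a : ℤ) (k : ℕ)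
    {w w' : Fin m → ℝ} (hw : w ∈ nonnegUnitSphere (Fin m))
    (hw' : w' ∈ nonnegUnitSphere (Fin m)) :
    ‖‖prodApply A a k w‖⁻¹ • prodApply A a k w - ‖prodApply A a k w'‖⁻¹ • prodApply A a k w'‖
      ≤ (c ^ 2 * (1 - c))⁻¹ * (1 - c) ^ k := by
  have h1c : 0 < 1 - c := sub_pos.2 hc1
  cases k with
  | zero =>
    have hK : 1 ≤ (c ^ 2 * (1 - c))⁻¹ :=
      (one_le_inv₀ (by positivity)).2 (by nlinarith [mul_le_mul hc1.le hc1.le hc0.le zero_le_one])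
    simpa [prodApply, hw.2, hw'.2] using (norm_sub_le_one_of_mem_nonnegUnitSphere hw hw').trans hK
  | succ k =>
    obtain ⟨s, r, hcs, hsx, hxr, hgap⟩ := exists_sandwich_prodApply hA hc hc0 hc1.le hw hw' a k
    obtain ⟨hy, hy0⟩ :=
      prodApply_nonneg_ne_zero hA a hw'.1 (ne_zero_of_mem_nonnegUnitSphere hw') (k + 1)
    calc _ ≤ (r - s) / s := norm_inv_norm_smul_sub_le hy hy0 (hc0.trans_le hcs) hsx hxr
      _ ≤ c⁻¹ * (1 - c) ^ k / c := by gcongr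
      _ = (c ^ 2 * (1 - c))⁻¹ * (1 - c) ^ (k + 1) := by
        field_simp
        ring

end ProdApply

section Pullback

variable {X : Type*} [PseudoMetricSpace X] {S : Set X} {T : ℤ → ℕ → X → X} {δ : ℕ → ℝ}

/-- `T a k` evolves a state from time `a` to time `a + k`; `v n` is the pullback attractor at
time `n`. -/
theorem exists_pullback_limit [CompleteSpace X] (hS : IsClosed S) (hS₀ : S.Nonempty)
    (hTS : ∀ a k x, x ∈ S → T a k x ∈ S)
    (hT : ∀ a j k x, x ∈ S → T a (j + k) x = T (a + j) k (T a j x))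
    (hδ : Tendsto δ atTop (𝓝 0))
    (hdiam : ∀ a k x y, x ∈ S → y ∈ S → dist (T a k x) (T a k y) ≤ δ k) :
    ∃ v : ℤ → X, (∀ n, v n ∈ S) ∧
      ∀ a n, a ≤ n → ∀ x ∈ S, dist (v n) (T a (n - a).toNat x) ≤ δ (n - a).toNat := by
  obtain ⟨u, hu⟩ := hS₀
  have hfactor : ∀ (n : ℤ) (b k : ℕ), k ≤ b → ∃ y ∈ S, T (n - b) b u = T (n - k) k y := by
    intro n b k hkb
    refine ⟨T (n - b) (b - k) u, hTS _ _ _ hu, ?_⟩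
    rw [← Nat.sub_add_cancel hkb, hT _ _ _ _ hu, Nat.sub_add_cancel hkb]
    congr 1
    push_cast [hkb]
    ring
  have hcauchy : ∀ n : ℤ, CauchySeq fun b : ℕ => T (n - b) b u := by
    intro n
    refine Metric.cauchySeq_iff'.2 fun ε hε => ?_
    obtain ⟨N, hN⟩ := (hδ.eventually (gt_mem_nhds hε)).exists
    refine ⟨N, fun b hb => ?_⟩
    obtain ⟨y, hy, hby⟩ := hfactor n b N hb
    rw [hby]
    exact (hdiam _ _ _ _ hy hu).trans_lt hN
  choose v hv using fun n => cauchySeq_tendsto_of_complete (hcauchy n)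
  refine ⟨v, fun n => hS.mem_of_tendsto (hv n) (Eventually.of_forall fun b => hTS _ _ _ hu), ?_⟩
  intro a n han x hx
  have ha : a = n - ((n - a).toNat : ℕ) := by omega
  refine le_of_tendsto ((hv n).dist tendsto_const_nhds) ?_
  filter_upwards [eventually_ge_atTop (n - a).toNat] with b hb
  obtain ⟨y, hy, hby⟩ := hfactor n b _ hb
  rw [hby, ← ha]
  exact hdiam _ _ _ _ hy hx

theorem tendsto_atBot_of_dist_le (hδ : Tendsto δ atTop (𝓝 0)) {n : ℤ} {v : X}
    (hv : ∀ a, a ≤ n → ∀ x ∈ S, dist v (T a (n - a).toNat x) ≤ δ (n - a).toNat)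
    {w : ℤ → X} (hw : ∀ a, w a ∈ S) :
    Tendsto (fun a => T a (n - a).toNat (w a)) atBot (𝓝 v) := by
  have hk : Tendsto (fun a : ℤ => (n - a).toNat) atBot atTop := by
    refine tendsto_atTop.2 fun b => ?_
    filter_upwards [eventually_le_atBot (n - b)] with a ha
    omega
  refine tendsto_iff_dist_tendsto_zero.2 (squeeze_zero' (Eventually.of_forall fun a => dist_nonneg)
    ?_ (hδ.comp hk))
  filter_upwards [eventually_le_atBot n] with a ha
  rw [dist_comm]
  exact hv a ha (w a) (hw a)

end Pullback

/-- Contraction property of products of strictly positive matrices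
(equations (2.17)–(2.18) and Appendix B). Here `‖x‖` is the sup norm `max_i |x_i|`
(the norm of `Fin m → ℝ`), and the condition `∀ i, ∑ j, |A n i j| ≤ (m ε̄)⁻¹`
expresses `‖A_n‖ ≤ (m ε̄)⁻¹`. -/
theorem positive_matrix_contraction (m : ℕ) (hm : 1 ≤ m) (εbar : ℝ) (hε : 0 < εbar)
    (A : ℤ → Matrix (Fin m) (Fin m) ℝ)
    (hpos : ∀ (n : ℤ) (i j : Fin m), εbar ≤ A n i j)
    (hnorm : ∀ (n : ℤ) (i : Fin m), ∑ j, |A n i j| ≤ ((m : ℝ) * εbar)⁻¹) :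
    ∃ (v : ℤ → Fin m → ℝ) (C θ : ℝ), 0 < C ∧ 0 < θ ∧ θ < 1 ∧
      (∀ n : ℤ, (∀ i, 0 ≤ v n i) ∧ ‖v n‖ = 1) ∧
      (∀ a n : ℤ, a < n → ∀ w : Fin m → ℝ, (∀ i, 0 ≤ w i) → ‖w‖ = 1 →
        ‖v n - ‖prodApply A a (n - a).toNat w‖⁻¹ • prodApply A a (n - a).toNat w‖
          ≤ C * θ ^ (n - a)) ∧
      (∀ n : ℤ, ∀ w : ℤ → Fin m → ℝ, (∀ a : ℤ, (∀ i, 0 ≤ w a i) ∧ ‖w a‖ = 1) →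
        Tendsto
          (fun a : ℤ =>
            ‖prodApply A a (n - a).toNat (w a)‖⁻¹ • prodApply A a (n - a).toNat (w a))
          atBot (nhds (v n))) := by
  have : Nonempty (Fin m) := ⟨⟨0, hm⟩⟩
  have hA : ∀ n i j, 0 < A n i j := fun n i j => hε.trans_le (hpos n i j)
  obtain ⟨c, hc0, hc1, hc⟩ : ∃ c, 0 < c ∧ c < 1 ∧ ∀ n, IsDoeblin c (A n) := by
    have hd : ∀ n, IsDoeblin (εbar / ((m : ℝ) * εbar)⁻¹) (A n) := fun n =>
      isDoeblin_of_le_of_rowSum_le hε.le (by positivity) (hpos n) fun i =>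
        (Finset.sum_le_sum fun j _ => le_abs_self _).trans (hnorm n i)
    have hd0 : 0 < εbar / ((m : ℝ) * εbar)⁻¹ := by positivity
    have hd1 := (hd 0).le_one (hA 0)
    -- halving the Doeblin constant keeps the contraction rate `1 - c` positive
    exact ⟨_, half_pos hd0, by linarith,
      fun n => (hd n).mono (fun i j => (hA n i j).le) (half_le_self hd0.le)⟩
  have hδ : Tendsto (fun k : ℕ => (c ^ 2 * (1 - c))⁻¹ * (1 - c) ^ k) atTop (𝓝 0) := by
    simpa only [mul_zero] using
      (tendsto_pow_atTop_nhds_zero_of_lt_one (sub_nonneg.2 hc1.le) (sub_lt_self 1 hc0)).const_mul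
        (c ^ 2 * (1 - c))⁻¹
  obtain ⟨v, hvS, hv⟩ := exists_pullback_limit (S := nonnegUnitSphere (Fin m))
    (T := fun a k w => ‖prodApply A a k w‖⁻¹ • prodApply A a k w)
    isClosed_nonnegUnitSphere nonnegUnitSphere_nonempty
    (fun a k _ hw => inv_norm_smul_prodApply_mem_nonnegUnitSphere hA a k hw)
    (fun a j k _ hw => inv_norm_smul_prodApply_add hA a j k hw.1
      (ne_zero_of_mem_nonnegUnitSphere hw))
    hδ (fun a k w w' hw hw' => by
      rw [dist_eq_norm]
      exact norm_inv_norm_smul_prodApply_sub_le hA hc hc0 hc1 a k hw hw')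
  refine ⟨v, (c ^ 2 * (1 - c))⁻¹, 1 - c, by positivity, by linarith, by linarith, hvS,
    fun a n han w hw0 hw1 => ?_, fun n w hw => ?_⟩
  · have hpow : (1 - c) ^ (n - a) = (1 - c) ^ (n - a).toNat := by
      rw [← zpow_natCast, Int.toNat_of_nonneg (by omega)]
    rw [hpow, ← dist_eq_norm]
    exact hv a n han.le w ⟨hw0, hw1⟩
  · exact tendsto_atBot_of_dist_le (S := nonnegUnitSphere (Fin m))
      (T := fun a k w => ‖prodApply A a k w‖⁻¹ • prodApply A a k w) hδ (hv · n) hw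
end

section
/- Fix an integer m ≥ 1, ε̄ > 0 and C̃_P > 0. Let (A_n)_{n∈ℤ} be m×m matrices with A_n(i,j) ≥ ε̄ for all i,j, ‖A_n‖ ≤ (m ε̄)^{−1} for all n, and such that for all integers n > k and every nonzero nonnegative x ∈ ℝ^m, e^{−C̃_P}‖x‖·𝟏 ≤ A_n ⋯ A_{k+1} x ≤ e^{C̃_P}‖x‖·𝟏 coordinatewise. Then there exists a sequence of vectors (u_n)_{n∈ℤ} in ℝ^m such that u_n = A_n u_{n−1} for all n ∈ ℤ, every entry of every u_n is strictly positive, and sup_{n∈ℤ} ‖u_n‖ < ∞. -/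
open Filter Topology

theorem prodApply_toNat_sub_of_lt {m : ℕ} (A : ℤ → Matrix (Fin m) (Fin m) ℝ) (v : Fin m → ℝ)
    {a n : ℤ} (h : a < n) :
    prodApply A a (n - a).toNat v = (A n).mulVec (prodApply A a (n - 1 - a).toNat v) := by
  obtain ⟨j, hj⟩ : ∃ j : ℕ, n - 1 - a = j := ⟨(n - 1 - a).toNat, by omega⟩
  have hsucc : (n - a).toNat = j + 1 := by omega
  rw [hsucc, hj, Int.toNat_natCast, prodApply]
  congr 2
  omega

theorem IsCompact.exists_tendsto_ultrafilter {α X : Type*} [TopologicalSpace X] {K : Set X}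
    (hK : IsCompact K) (U : Ultrafilter α) {f : α → X} (hf : ∀ᶠ a in U, f a ∈ K) :
    ∃ x ∈ K, Tendsto f U (𝓝 x) :=
  hK.ultrafilter_le_nhds (U.map f) (by rwa [Ultrafilter.coe_map, le_principal_iff])

theorem exists_solution_of_eventually_solution_mem_Icc {α ι : Type*} [Fintype ι] (l : Filter α) [l.NeBot]
    (A : ℤ → Matrix ι ι ℝ) (w : α → ℤ → ι → ℝ) {a b : ℝ}
    (hrec : ∀ n, ∀ᶠ k in l, w k n = (A n).mulVec (w k (n - 1)))
    (hbound : ∀ n, ∀ᶠ k in l, ∀ i, w k n i ∈ Set.Icc a b) :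
    ∃ u : ℤ → ι → ℝ, (∀ n, u n = (A n).mulVec (u (n - 1))) ∧ ∀ n i, u n i ∈ Set.Icc a b := by
  set U := Ultrafilter.of l
  have hUl : (U : Filter α) ≤ l := Ultrafilter.of_le l
  have hlim : ∀ n, ∃ x ∈ Set.univ.pi fun _ : ι => Set.Icc a b, Tendsto (w · n) U (𝓝 x) :=
    fun n => (isCompact_univ_pi fun _ => isCompact_Icc).exists_tendsto_ultrafilter U
      (hUl <| (hbound n).mono fun _ => Set.mem_univ_pi.2)
  choose u hu_mem hu_lim using hlim
  refine ⟨u, fun n => ?_, fun n i => hu_mem n i trivial⟩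
  have hmul : Tendsto (fun k => (A n).mulVec (w k (n - 1))) U (𝓝 ((A n).mulVec (u (n - 1)))) :=
    ((continuous_const.matrix_mulVec continuous_id).tendsto _).comp (hu_lim (n - 1))
  exact tendsto_nhds_unique ((hu_lim n).congr' (hUl (hrec n))) hmul

theorem exists_bounded_positive_solution_general (m : ℕ) (hm : 1 ≤ m) (Ctil : ℝ)
    (A : ℤ → Matrix (Fin m) (Fin m) ℝ)
    (hBP : ∀ (n k : ℤ), k < n → ∀ x : Fin m → ℝ, (∀ i, 0 ≤ x i) → x ≠ 0 →
      ∀ i : Fin m,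
        Real.exp (-Ctil) * ‖x‖ ≤ prodApply A k (n - k).toNat x i ∧
        prodApply A k (n - k).toNat x i ≤ Real.exp Ctil * ‖x‖) :
    ∃ u : ℤ → Fin m → ℝ,
      (∀ n : ℤ, u n = (A n).mulVec (u (n - 1))) ∧
      (∀ (n : ℤ) (i : Fin m), 0 < u n i) ∧
      (∃ M : ℝ, ∀ n : ℤ, ‖u n‖ ≤ M) := by
  have : Nonempty (Fin m) := ⟨⟨0, hm⟩⟩
  set w : ℕ → ℤ → Fin m → ℝ := fun k n => prodApply A (-k) (n - -k).toNat 1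
  have hrec : ∀ n, ∀ᶠ k in atTop, w k n = (A n).mulVec (w k (n - 1)) := fun n =>
    (eventually_gt_atTop (-n).toNat).mono fun k hk =>
      by simpa only [w, sub_right_comm] using prodApply_toNat_sub_of_lt A 1 (a := -k) (by omega)
  have hbound : ∀ n, ∀ᶠ k in atTop, ∀ i, w k n i ∈ Set.Icc (Real.exp (-Ctil)) (Real.exp Ctil) :=
    fun n => (eventually_gt_atTop (-n).toNat).mono fun k hk i => by
      simpa only [w, Set.mem_Icc, norm_one, mul_one] using
        hBP n (-k) (by omega) 1 (fun _ => zero_le_one) one_ne_zero i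
  obtain ⟨u, hu_rec, hu_mem⟩ := exists_solution_of_eventually_solution_mem_Icc atTop A w hrec hbound
  refine ⟨u, hu_rec, fun n i => (Real.exp_pos _).trans_le (hu_mem n i).1, Real.exp Ctil, fun n => ?_⟩
  refine (pi_norm_le_iff_of_nonneg (Real.exp_pos Ctil).le).2 fun i => ?_
  rw [Real.norm_eq_abs, abs_of_pos ((Real.exp_pos _).trans_le (hu_mem n i).1)]
  exact (hu_mem n i).2

/-- existence of a bounded, strictly positive solution of `u_n = A_n u_{n−1}`
(Lemma 4.2(i)). Here `‖x‖` is the sup norm `max_i |x_i|` on `Fin m → ℝ`. -/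
theorem exists_bounded_positive_solution (m : ℕ) (hm : 1 ≤ m) (εbar Ctil : ℝ)
    (hε : 0 < εbar) (hCtil : 0 < Ctil)
    (A : ℤ → Matrix (Fin m) (Fin m) ℝ)
    (hpos : ∀ (n : ℤ) (i j : Fin m), εbar ≤ A n i j)
    (hnorm : ∀ (n : ℤ) (i : Fin m), ∑ j, |A n i j| ≤ ((m : ℝ) * εbar)⁻¹)
    (hBP : ∀ (n k : ℤ), k < n → ∀ x : Fin m → ℝ, (∀ i, 0 ≤ x i) → x ≠ 0 →
      ∀ i : Fin m,
        Real.exp (-Ctil) * ‖x‖ ≤ prodApply A k (n - k).toNat x i ∧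
        prodApply A k (n - k).toNat x i ≤ Real.exp Ctil * ‖x‖) :
    ∃ u : ℤ → Fin m → ℝ,
      (∀ n : ℤ, u n = (A n).mulVec (u (n - 1))) ∧
      (∀ (n : ℤ) (i : Fin m), 0 < u n i) ∧
      (∃ M : ℝ, ∀ n : ℤ, ‖u n‖ ≤ M) :=
  exists_bounded_positive_solution_general m hm Ctil A hBP
end

section
/- Fix an integer m ≥ 1, ε̄ > 0 and C̃_P > 0. Let (A_n)_{n∈ℤ} be m×m matrices with A_n(i,j) ≥ ε̄ for all i,j, ‖A_n‖ ≤ (m ε̄)^{−1} for all n, and such that for all integers n > k and every nonzero nonnegative x ∈ ℝ^m, e^{−C̃_P}‖x‖·𝟏 ≤ A_n ⋯ A_{k+1} x ≤ e^{C̃_P}‖x‖·𝟏 coordinatewise. Let (u_n)_{n∈ℤ} be a bounded sequence of strictly positive vectors with u_n = A_n u_{n−1} for all n. If (ũ_n)_{n∈ℤ} is any sequence of vectors in ℝ^m satisfying ũ_n = A_n ũ_{n−1} for all n ∈ ℤ and (1/|n|) log‖ũ_n‖ → 0 as n → −∞, then (ũ_n) is bounded and there exists c ∈ ℝ such that ũ_n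 = c·u_n for all n ∈ ℤ. -/
/-!
Dividing a solution `v` by the positive solution `u` coordinatewise turns the recursion
`v n = A n v (n-1)` into `ρ n = W n ρ (n-1)` for the Doob transforms
`W n i j = A n i j u (n-1) j / u n i`, which are row-stochastic. The bounds on `u` (from below
by the Birkhoff-type estimate, from above by hypothesis) bound the entries of every `W n` below
by some `δ > 0`, so each step contracts the oscillation `max ρ - min ρ` by the factor `1 - δ`.
Running the recursion `j` steps forward from time `n - j`, the oscillation of `ρ n` is at most
`(1 - δ)^j ‖ρ (n - j)‖`, which tends to `0` because `v` grows subexponentially backwards.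
Hence each `ρ n` is a constant vector, and being averages of each other, all these constants agree.
-/

open Filter

open Topology Matrix

section Subexponential

theorem eventually_abs_le_exp_mul_abs {f : ℤ → ℝ}
    (hf : Tendsto (fun k : ℤ => |(k : ℝ)|⁻¹ * Real.log (f k)) atBot (𝓝 0)) {η : ℝ} (hη : 0 < η) :
    ∀ᶠ k in atBot, |f k| ≤ Real.exp (η * |(k : ℝ)|) := by
  filter_upwards [hf.eventually (eventually_le_nhds hη), eventually_lt_atBot 0] with k hk hk0
  have hk_abs : 0 < |(k : ℝ)| := abs_pos.2 (by exact_mod_cast hk0.ne)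
  rw [inv_mul_le_iff₀ hk_abs, mul_comm] at hk
  calc |f k| ≤ Real.exp (Real.log |f k|) := Real.le_exp_log _
    _ ≤ Real.exp (η * |(k : ℝ)|) := by rwa [Real.log_abs, Real.exp_le_exp]

theorem tendsto_pow_mul_comp_sub {f : ℤ → ℝ}
    (hf : Tendsto (fun k : ℤ => |(k : ℝ)|⁻¹ * Real.log (f k)) atBot (𝓝 0)) {θ : ℝ} (hθ₀ : 0 ≤ θ)
    (hθ₁ : θ < 1) (n : ℤ) : Tendsto (fun j : ℕ => θ ^ j * f (n - j)) atTop (𝓝 0) := by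
  obtain ⟨η, hθη, hη⟩ : ∃ η, θ * Real.exp η < 1 ∧ 0 < η := by
    have hcont : Tendsto (fun η => θ * Real.exp η) (𝓝 0) (𝓝 θ) := by
      simpa using (Real.continuous_exp.tendsto 0).const_mul θ
    exact (((hcont.mono_left nhdsWithin_le_nhds).eventually (eventually_lt_nhds hθ₁)).and
      (self_mem_nhdsWithin (s := Set.Ioi 0))).exists
  have hshift : Tendsto (fun j : ℕ => n - (j : ℤ)) atTop atBot :=
    tendsto_atBot.2 fun b => eventually_atTop.2 ⟨(n - b).toNat, fun j hj => by omega⟩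
  have hgeom : Tendsto (fun j : ℕ => Real.exp (η * |(n : ℝ)|) * (θ * Real.exp η) ^ j) atTop
      (𝓝 0) := by
    simpa using (tendsto_pow_atTop_nhds_zero_of_lt_one (by positivity) hθη).const_mul
      (Real.exp (η * |(n : ℝ)|))
  refine squeeze_zero_norm' ?_ hgeom
  filter_upwards [hshift.eventually (eventually_abs_le_exp_mul_abs hf hη)] with j hj
  have hdist : |((n - j : ℤ) : ℝ)| ≤ |(n : ℝ)| + j := by
    push_cast
    simpa using abs_sub (n : ℝ) j
  calc ‖θ ^ j * f (n - j)‖ = θ ^ j * |f (n - j)| := by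
        rw [norm_mul, norm_pow, Real.norm_of_nonneg hθ₀, Real.norm_eq_abs]
    _ ≤ θ ^ j * Real.exp (η * (|(n : ℝ)| + j)) := by
        gcongr
        exact hj.trans (Real.exp_le_exp.2 (mul_le_mul_of_nonneg_left hdist hη.le))
    _ = Real.exp (η * |(n : ℝ)|) * (θ * Real.exp η) ^ j := by
        rw [mul_add, Real.exp_add, mul_pow, ← Real.exp_nat_mul, mul_comm (j : ℝ)]
        ring

end Subexponential

section Stochastic

variable {ι : Type*} [Fintype ι]

theorem mulVec_sub_eq_sum_of_row_sum_eq_one {W : Matrix ι ι ℝ} (hW : ∀ i, ∑ j, W i j = 1)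
    (x : ι → ℝ) (c : ℝ) (i : ι) : (W *ᵥ x) i - c = ∑ j, W i j * (x j - c) := by
  simp only [mulVec, dotProduct, mul_sub, Finset.sum_sub_distrib, ← Finset.sum_mul, hW, one_mul]

theorem le_one_of_forall_le_of_sum_eq_one {w : ι → ℝ} {δ : ℝ} (hδ : 0 ≤ δ) (hw : ∀ j, δ ≤ w j)
    (hw₁ : ∑ j, w j = 1) (i : ι) : δ ≤ 1 :=
  (hw i).trans <| hw₁ ▸ Finset.single_le_sum (fun j _ => hδ.trans (hw j)) (Finset.mem_univ i)

theorem mulVec_sub_le_of_le_entries {W : Matrix ι ι ℝ} {δ d : ℝ} (hδ : 0 ≤ δ)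
    (hW : ∀ i j, δ ≤ W i j) (hW₁ : ∀ i, ∑ j, W i j = 1) {x : ι → ℝ}
    (hx : ∀ j j', x j - x j' ≤ d) (i i' : ι) : (W *ᵥ x) i - (W *ᵥ x) i' ≤ (1 - δ) * d := by
  have : Nonempty ι := ⟨i⟩
  obtain ⟨jmin, hjmin⟩ := Finite.exists_min x
  obtain ⟨jmax, hjmax⟩ := Finite.exists_max x
  have hW₀ : ∀ i j, 0 ≤ W i j := fun i j => hδ.trans (hW i j)
  have hδ₁ : δ ≤ 1 := le_one_of_forall_le_of_sum_eq_one hδ (hW i) (hW₁ i) i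
  have upper : δ * (x jmax - x jmin) ≤ x jmax - (W *ᵥ x) i := by
    calc δ * (x jmax - x jmin) ≤ W i jmin * (x jmax - x jmin) :=
          mul_le_mul_of_nonneg_right (hW i jmin) (sub_nonneg.2 (hjmax jmin))
      _ ≤ ∑ j, W i j * (x jmax - x j) :=
          Finset.single_le_sum (f := fun j => W i j * (x jmax - x j))
            (fun j _ => mul_nonneg (hW₀ i j) (sub_nonneg.2 (hjmax j))) (Finset.mem_univ jmin)
      _ = x jmax - (W *ᵥ x) i := by
          rw [← neg_sub, mulVec_sub_eq_sum_of_row_sum_eq_one hW₁, ← Finset.sum_neg_distrib]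
          simp only [← mul_neg, neg_sub]
  have lower : 0 ≤ (W *ᵥ x) i' - x jmin := by
    rw [mulVec_sub_eq_sum_of_row_sum_eq_one hW₁]
    exact Finset.sum_nonneg fun j _ => mul_nonneg (hW₀ i' j) (sub_nonneg.2 (hjmin j))
  nlinarith [mul_le_mul_of_nonneg_left (hx jmax jmin) (sub_nonneg.2 hδ₁)]

variable {W : ℤ → Matrix ι ι ℝ} {δ : ℝ} {ρ : ℤ → ι → ℝ}

theorem sub_le_pow_mul_of_le_entries (hδ : 0 ≤ δ) (hW : ∀ n i j, δ ≤ W n i j)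
    (hW₁ : ∀ n i, ∑ j, W n i j = 1) (hρ : ∀ n, ρ n = W n *ᵥ ρ (n - 1)) {k : ℤ} {d : ℝ}
    (hd : ∀ j j', ρ k j - ρ k j' ≤ d) (l : ℕ) (i i' : ι) :
    ρ (k + l) i - ρ (k + l) i' ≤ (1 - δ) ^ l * d := by
  induction l generalizing i i' with
  | zero => simpa using hd i i'
  | succ l ih =>
    rw [hρ, show k + (l + 1 : ℕ) - 1 = k + l by push_cast; ring, pow_succ', mul_assoc]
    exact mulVec_sub_le_of_le_entries hδ (hW _) (hW₁ _) ih i i'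

theorem exists_eq_const_of_le_entries (hδ : 0 < δ) (hW : ∀ n i j, δ ≤ W n i j)
    (hW₁ : ∀ n i, ∑ j, W n i j = 1) (hρ : ∀ n, ρ n = W n *ᵥ ρ (n - 1))
    (hgrowth : ∀ θ : ℝ, 0 ≤ θ → θ < 1 → ∀ n : ℤ,
      Tendsto (fun l : ℕ => θ ^ l * ‖ρ (n - l)‖) atTop (𝓝 0)) :
    ∃ c, ∀ n i, ρ n i = c := by
  have flat : ∀ n i i', ρ n i ≤ ρ n i' := by
    intro n i i'
    have hδ₁ := le_one_of_forall_le_of_sum_eq_one hδ.le (hW n i) (hW₁ n i) i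
    have hosc : ∀ (x : ι → ℝ) j j', x j - x j' ≤ 2 * ‖x‖ := fun x j j' =>
      calc x j - x j' ≤ ‖x j‖ + ‖x j'‖ := (Real.le_norm_self _).trans (norm_sub_le _ _)
        _ ≤ 2 * ‖x‖ := by linarith [norm_le_pi_norm x j, norm_le_pi_norm x j']
    have hbound : ∀ l : ℕ, ρ n i - ρ n i' ≤ 2 * ((1 - δ) ^ l * ‖ρ (n - l)‖) := fun l => by
      have := sub_le_pow_mul_of_le_entries hδ.le hW hW₁ hρ (hosc (ρ (n - l))) l i i'
      rw [sub_add_cancel] at this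
      linarith
    have hlim := (hgrowth (1 - δ) (by linarith) (by linarith) n).const_mul 2
    rw [mul_zero] at hlim
    linarith [ge_of_tendsto' hlim hbound]
  have step : ∀ n i, ρ n i = ρ (n - 1) i := fun n i => by
    rw [← sub_eq_zero, hρ, mulVec_sub_eq_sum_of_row_sum_eq_one (hW₁ n)]
    exact Finset.sum_eq_zero fun j _ => by
      rw [le_antisymm (flat (n - 1) j i) (flat (n - 1) i j), sub_self, mul_zero]
  rcases isEmpty_or_nonempty ι with hι | ⟨⟨i₀⟩⟩
  · exact ⟨0, fun _ i => isEmptyElim i⟩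
  refine ⟨ρ 0 i₀, fun n i => (le_antisymm (flat n i i₀) (flat n i₀ i)).trans ?_⟩
  induction n using Int.induction_on with
  | zero => rfl
  | succ k ih => rwa [step, add_sub_cancel_right]
  | pred k ih => rw [← ih, step (-k)]

end Stochastic

namespace Matrix

variable {ι : Type*} [Fintype ι]

noncomputable def doobTransform (A : Matrix ι ι ℝ) (x : ι → ℝ) : Matrix ι ι ℝ :=
  of fun i j => A i j * x j / (A *ᵥ x) i

variable {A : Matrix ι ι ℝ} {x : ι → ℝ}

theorem doobTransform_row_sum (hAx : ∀ i, (A *ᵥ x) i ≠ 0) (i : ι) :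
    ∑ j, doobTransform A x i j = 1 := by
  simp only [doobTransform, of_apply, ← Finset.sum_div]
  exact div_self (hAx i)

theorem doobTransform_mulVec_div (hx : ∀ j, x j ≠ 0) (y : ι → ℝ) :
    doobTransform A x *ᵥ (y / x) = (A *ᵥ y) / (A *ᵥ x) := by
  ext i
  simp only [doobTransform, mulVec, dotProduct, of_apply, Pi.div_apply, Finset.sum_div]
  exact Finset.sum_congr rfl fun j _ => by field_simp [hx j]

theorem div_le_doobTransform {ε c M : ℝ} {i j : ι} (hε : 0 ≤ ε) (hc : 0 ≤ c) (hA : ε ≤ A i j)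
    (hx : c ≤ x j) (hAx : 0 < (A *ᵥ x) i) (hM : (A *ᵥ x) i ≤ M) :
    ε * c / M ≤ doobTransform A x i j :=
  div_le_div₀ (mul_nonneg (hε.trans hA) (hc.trans hx)) (mul_le_mul hA hx hc (hε.trans hA)) hAx hM

end Matrix

theorem prodApply_eq_of_rec {m : ℕ} {A : ℤ → Matrix (Fin m) (Fin m) ℝ} {u : ℤ → Fin m → ℝ}
    (hu : ∀ n, u n = A n *ᵥ u (n - 1)) (k : ℤ) (l : ℕ) : prodApply A k l (u k) = u (k + l) := by
  induction l with
  | zero => simp [prodApply]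
  | succ l ih =>
    rw [prodApply, ih, hu (k + (l + 1 : ℕ)), show k + (l + 1 : ℕ) - 1 = k + l by push_cast; ring,
      show k + l + 1 = k + (l + 1 : ℕ) by push_cast; ring]

theorem exists_pos_le_of_prodApply_bounds {m : ℕ} {A : ℤ → Matrix (Fin m) (Fin m) ℝ} {C : ℝ}
    (hBP : ∀ (n k : ℤ), k < n → ∀ x : Fin m → ℝ, (∀ i, 0 ≤ x i) → x ≠ 0 →
      ∀ i : Fin m,
        Real.exp (-C) * ‖x‖ ≤ prodApply A k (n - k).toNat x i ∧
        prodApply A k (n - k).toNat x i ≤ Real.exp C * ‖x‖)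
    {u : ℤ → Fin m → ℝ} (hu : ∀ n, u n = A n *ᵥ u (n - 1)) (hu₀ : ∀ n i, 0 ≤ u n i)
    (hu_ne : ∀ n, u n ≠ 0) : ∃ c > 0, ∀ n i, c ≤ u n i := by
  have hcompare : ∀ k n, k < n → ∀ i,
      Real.exp (-C) * ‖u k‖ ≤ u n i ∧ u n i ≤ Real.exp C * ‖u k‖ := fun k n hkn i => by
    have := hBP n k hkn (u k) (hu₀ k) (hu_ne k) i
    rwa [prodApply_eq_of_rec hu, show k + ((n - k).toNat : ℤ) = n by omega] at this
  have hpast : ∀ k < 0, Real.exp (-C) * ‖u 0‖ ≤ ‖u k‖ := fun k hk => by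
    rw [Real.exp_neg, inv_mul_le_iff₀ (Real.exp_pos C)]
    refine (pi_norm_le_iff_of_nonneg (by positivity)).2 fun i => ?_
    rw [Real.norm_of_nonneg (hu₀ 0 i)]
    exact (hcompare k 0 hk i).2
  refine ⟨Real.exp (-C) * (Real.exp (-C) * ‖u 0‖), by have := norm_pos_iff.2 (hu_ne 0); positivity,
    fun n i => ?_⟩
  -- compare with a time in the past of both `n` and `0`
  have hk : min n 0 - 1 < n ∧ min n 0 - 1 < 0 := by omega
  exact (mul_le_mul_of_nonneg_left (hpast _ hk.2) (Real.exp_pos _).le).trans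
    (hcompare _ n hk.1 i).1

theorem pi_norm_div_le {ι : Type*} [Fintype ι] {x y : ι → ℝ} {c : ℝ} (hc : 0 < c)
    (hy : ∀ i, c ≤ y i) : ‖x / y‖ ≤ ‖x‖ / c :=
  (pi_norm_le_iff_of_nonneg (by positivity)).2 fun i => by
    rw [Pi.div_apply, norm_div, Real.norm_of_nonneg (hc.le.trans (hy i))]
    exact div_le_div₀ (norm_nonneg _) (norm_le_pi_norm x i) hc (hy i)

theorem solution_unique_up_to_constant_general (m : ℕ) (hm : 1 ≤ m) (εbar Ctil : ℝ)
    (hε : 0 < εbar)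
    (A : ℤ → Matrix (Fin m) (Fin m) ℝ)
    (hpos : ∀ (n : ℤ) (i j : Fin m), εbar ≤ A n i j)
    (hBP : ∀ (n k : ℤ), k < n → ∀ x : Fin m → ℝ, (∀ i, 0 ≤ x i) → x ≠ 0 →
      ∀ i : Fin m,
        Real.exp (-Ctil) * ‖x‖ ≤ prodApply A k (n - k).toNat x i ∧
        prodApply A k (n - k).toNat x i ≤ Real.exp Ctil * ‖x‖)
    (u : ℤ → Fin m → ℝ)
    (hu_rec : ∀ n : ℤ, u n = (A n).mulVec (u (n - 1)))
    (hu_pos : ∀ (n : ℤ) (i : Fin m), 0 < u n i)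
    (hu_bdd : ∃ M : ℝ, ∀ n : ℤ, ‖u n‖ ≤ M)
    (v : ℤ → Fin m → ℝ)
    (hv_rec : ∀ n : ℤ, v n = (A n).mulVec (v (n - 1)))
    (hv_subexp :
      Tendsto (fun n : ℤ => (|(n : ℝ)|)⁻¹ * Real.log ‖v n‖) atBot (nhds 0)) :
    (∃ M : ℝ, ∀ n : ℤ, ‖v n‖ ≤ M) ∧ ∃ c : ℝ, ∀ n : ℤ, v n = c • u n := by
  obtain ⟨M, hM⟩ := hu_bdd
  have hu_ne : ∀ n, u n ≠ 0 := fun n h => (hu_pos n ⟨0, hm⟩).ne' (by simp [h])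
  obtain ⟨c₀, hc₀, hc₀u⟩ :=
    exists_pos_le_of_prodApply_bounds hBP hu_rec (fun n i => (hu_pos n i).le) hu_ne
  have huM : ∀ n i, u n i ≤ M := fun n i =>
    (Real.le_norm_self _).trans ((norm_le_pi_norm (u n) i).trans (hM n))
  have hM₀ : 0 < M := hc₀.trans_le ((hc₀u 0 ⟨0, hm⟩).trans (huM 0 ⟨0, hm⟩))
  have hAu : ∀ n, A n *ᵥ u (n - 1) = u n := fun n => (hu_rec n).symm
  set W : ℤ → Matrix (Fin m) (Fin m) ℝ := fun n => (A n).doobTransform (u (n - 1))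
  have hW : ∀ n i j, εbar * c₀ / M ≤ W n i j := fun n i j =>
    div_le_doobTransform hε.le hc₀.le (hpos n i j) (hc₀u _ j) (hAu n ▸ hu_pos n i)
      (hAu n ▸ huM n i)
  have hW₁ : ∀ n i, ∑ j, W n i j = 1 := fun n =>
    doobTransform_row_sum fun i => hAu n ▸ (hu_pos n i).ne'
  have hρ : ∀ n, v n / u n = W n *ᵥ (v (n - 1) / u (n - 1)) := fun n => by
    rw [doobTransform_mulVec_div fun j => (hu_pos _ j).ne', hAu, ← hv_rec]
  have hgrowth : ∀ θ : ℝ, 0 ≤ θ → θ < 1 → ∀ n : ℤ,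
      Tendsto (fun l : ℕ => θ ^ l * ‖v (n - l) / u (n - l)‖) atTop (𝓝 0) := by
    intro θ hθ₀ hθ₁ n
    have hv_lim := (tendsto_pow_mul_comp_sub hv_subexp hθ₀ hθ₁ n).div_const c₀
    rw [zero_div] at hv_lim
    refine squeeze_zero (fun l => by positivity) (fun l => ?_) hv_lim
    rw [mul_div_assoc]
    exact mul_le_mul_of_nonneg_left (pi_norm_div_le hc₀ (hc₀u _)) (pow_nonneg hθ₀ l)
  obtain ⟨c, hc⟩ := exists_eq_const_of_le_entries (by positivity) hW hW₁ hρ hgrowth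
  have hv : ∀ n, v n = c • u n := fun n => funext fun i =>
    (div_eq_iff (hu_pos n i).ne').1 (hc n i)
  refine ⟨⟨|c| * M, fun n => ?_⟩, c, hv⟩
  rw [hv, norm_smul, Real.norm_eq_abs]
  exact mul_le_mul_of_nonneg_left (hM n) (abs_nonneg c)

/-- uniqueness (up to constant multiples) of subexponentially growing
solutions of `ũ_n = A_n ũ_{n−1}` (Lemma 4.2(ii)). Here `‖x‖` is the sup norm
`max_i |x_i|` on `Fin m → ℝ`. -/
theorem solution_unique_up_to_constant (m : ℕ) (hm : 1 ≤ m) (εbar Ctil : ℝ)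
    (hε : 0 < εbar) (hCtil : 0 < Ctil)
    (A : ℤ → Matrix (Fin m) (Fin m) ℝ)
    (hpos : ∀ (n : ℤ) (i j : Fin m), εbar ≤ A n i j)
    (hnorm : ∀ (n : ℤ) (i : Fin m), ∑ j, |A n i j| ≤ ((m : ℝ) * εbar)⁻¹)
    (hBP : ∀ (n k : ℤ), k < n → ∀ x : Fin m → ℝ, (∀ i, 0 ≤ x i) → x ≠ 0 →
      ∀ i : Fin m,
        Real.exp (-Ctil) * ‖x‖ ≤ prodApply A k (n - k).toNat x i ∧
        prodApply A k (n - k).toNat x i ≤ Real.exp Ctil * ‖x‖)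
    (u : ℤ → Fin m → ℝ)
    (hu_rec : ∀ n : ℤ, u n = (A n).mulVec (u (n - 1)))
    (hu_pos : ∀ (n : ℤ) (i : Fin m), 0 < u n i)
    (hu_bdd : ∃ M : ℝ, ∀ n : ℤ, ‖u n‖ ≤ M)
    (v : ℤ → Fin m → ℝ)
    (hv_rec : ∀ n : ℤ, v n = (A n).mulVec (v (n - 1)))
    (hv_subexp :
      Tendsto (fun n : ℤ => (|(n : ℝ)|)⁻¹ * Real.log ‖v n‖) atBot (nhds 0)) :
    (∃ M : ℝ, ∀ n : ℤ, ‖v n‖ ≤ M) ∧ ∃ c : ℝ, ∀ n : ℤ, v n = c • u n :=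
  solution_unique_up_to_constant_general m hm εbar Ctil hε A hpos hBP u hu_rec hu_pos hu_bdd v
    hv_rec hv_subexp
end

section
/- Fix an integer m ≥ 1 and sequences (P_n), (Q_n), (R_n) of m×m real matrices, n ∈ ℤ. Suppose (ζ_n)_{n∈ℤ} is a sequence of m×m matrices such that I − R_n − Q_n ζ_{n−1} is invertible and ζ_n = (I − R_n − Q_n ζ_{n−1})^{−1} P_n for all n, and set A_n = (I − R_n − Q_n ζ_{n−1})^{−1} Q_n. If (𝔪_n)_{n∈ℤ} is a sequence of column vectors in ℝ^m satisfying 𝔪_n = P_n 𝔪_{n+1} + R_n 𝔪_n + Q_n 𝔪_{n−1} for all n, then the vectors u_n = 𝔪_n − ζ_n 𝔪_{n+1} satisfy u_n = A_n u_{n−1} for all n ∈ ℤ. -/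
/-! Multiplying the three-term recursion by `M_n = I − R_n − Q_n ζ_{n−1}` and using
`M_n ζ_n = P_n` gives `M_n u_n = Q_n u_{n−1}`; invert `M_n`. -/

open Matrix

section

variable {ι α : Type*} [Fintype ι] [DecidableEq ι] [CommRing α]

theorem Matrix.eq_nonsing_inv_mulVec_of_mulVec_eq {A : Matrix ι ι α} {u v : ι → α}
    (hA : IsUnit A) (h : A *ᵥ u = v) : u = A⁻¹ *ᵥ v := by
  rw [← h, mulVec_mulVec, nonsing_inv_mul A ((isUnit_iff_isUnit_det A).mp hA), one_mulVec]

theorem Matrix.mulVec_sub_mulVec_of_three_term_eq {P Q R Z Z' : Matrix ι ι α} {x y w : ι → α}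
    (hx : x = P *ᵥ y + R *ᵥ x + Q *ᵥ w) (hZ : (1 - R - Q * Z') * Z = P) :
    (1 - R - Q * Z') *ᵥ (x - Z *ᵥ y) = Q *ᵥ (w - Z' *ᵥ x) := by
  rw [mulVec_sub, mulVec_mulVec, hZ, mulVec_sub, mulVec_mulVec, sub_mulVec, sub_mulVec,
    one_mulVec]
  nth_rewrite 1 [hx]
  abel

end

theorem martingale_difference_recursion_general (m : ℕ)
    (P Q R ζ : ℤ → Matrix (Fin m) (Fin m) ℝ)
    (hinv : ∀ n : ℤ, IsUnit (1 - R n - Q n * ζ (n - 1)))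
    (hζ : ∀ n : ℤ, ζ n = (1 - R n - Q n * ζ (n - 1))⁻¹ * P n)
    (𝔪 : ℤ → Fin m → ℝ)
    (hmart : ∀ n : ℤ,
      𝔪 n = (P n).mulVec (𝔪 (n + 1)) + (R n).mulVec (𝔪 n) + (Q n).mulVec (𝔪 (n - 1))) :
    ∀ n : ℤ,
      𝔪 n - (ζ n).mulVec (𝔪 (n + 1)) =
        ((1 - R n - Q n * ζ (n - 1))⁻¹ * Q n).mulVec
          (𝔪 (n - 1) - (ζ (n - 1)).mulVec (𝔪 n)) := by
  intro n
  have hMζ : (1 - R n - Q n * ζ (n - 1)) * ζ n = P n := by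
    rw [hζ n, mul_nonsing_inv_cancel_left _ _ ((isUnit_iff_isUnit_det _).mp (hinv n))]
  rw [← mulVec_mulVec]
  exact eq_nonsing_inv_mulVec_of_mulVec_eq (hinv n)
    (mulVec_sub_mulVec_of_three_term_eq (hmart n) hMζ)

/-- if `𝔪` solves the martingale equation then
`u_n = 𝔪_n − ζ_n 𝔪_{n+1}` satisfies `u_n = A_n u_{n−1}` where
`A_n = (I − R_n − Q_n ζ_{n−1})⁻¹ Q_n` (equation (4.2) in Lemma 4.1). -/
theorem martingale_difference_recursion (m : ℕ) (hm : 1 ≤ m)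
    (P Q R ζ : ℤ → Matrix (Fin m) (Fin m) ℝ)
    (hinv : ∀ n : ℤ, IsUnit (1 - R n - Q n * ζ (n - 1)))
    (hζ : ∀ n : ℤ, ζ n = (1 - R n - Q n * ζ (n - 1))⁻¹ * P n)
    (𝔪 : ℤ → Fin m → ℝ)
    (hmart : ∀ n : ℤ,
      𝔪 n = (P n).mulVec (𝔪 (n + 1)) + (R n).mulVec (𝔪 n) + (Q n).mulVec (𝔪 (n - 1))) :
    ∀ n : ℤ,
      𝔪 n - (ζ n).mulVec (𝔪 (n + 1)) =
        ((1 - R n - Q n * ζ (n - 1))⁻¹ * Q n).mulVec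
          (𝔪 (n - 1) - (ζ (n - 1)).mulVec (𝔪 n)) :=
  martingale_difference_recursion_general m P Q R ζ hinv hζ 𝔪 hmart
end

section
/- Fix an integer m ≥ 1 and sequences (P_n), (Q_n), (R_n) of m×m real matrices, n ∈ ℤ. Suppose: (ζ_n) are matrices with I − R_n − Q_n ζ_{n−1} invertible and ζ_n = (I − R_n − Q_n ζ_{n−1})^{−1} P_n; (ζ⁻_n) are matrices with I − R_n − P_n ζ⁻_{n+1} invertible and ζ⁻_n = (I − R_n − P_n ζ⁻_{n+1})^{−1} Q_n; α_n = Q_{n+1}(I − R_n − Q_n ζ_{n−1})^{−1} and α⁻_n = P_{n−1}(I − R_n − P_n ζ⁻_{n+1})^{−1}. Let (𝔪_n) be column vectors with 𝔪_n = P_n 𝔪_{n+1} + R_n 𝔪_n + Q_n 𝔪_{n−1} for all n, and let (ρ_n) be row vectors with ρ_n = ρ_{n−1}P_{n−1} + ρ_n R_n + ρ_{n+1}Q_{n+1}, ρ_n = ρ_{n+1} α_n, and ρ_{n+1} = ρ_n α⁻_{n+1} for all n. Then there exists a constant c ∈ ℝ such that for all n ∈ ℤ: ρ_{n+1} Q_{n+1}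 (𝔪_n − ζ_n 𝔪_{n+1}) = c and ρ_n P_n (𝔪_{n+1} − ζ⁻_{n+1} 𝔪_n) = −c. -/
/-!
Put `A_n = I − R_n − Q_n ζ_{n−1}`; the hypotheses say exactly that `ρ_n A_n = ρ_{n+1} Q_{n+1}` and
`A_n ζ_n = P_n`. Hence `ρ_{n+1} Q_{n+1} ζ_n 𝔪_{n+1} = ρ_n P_n 𝔪_{n+1}`, and pairing the harmonic
equation in the form `A_n 𝔪_n = P_n 𝔪_{n+1} + Q_n (𝔪_{n−1} − ζ_{n−1} 𝔪_n)` with `ρ_n` turns the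
current at `n` into the current at `n − 1`. The mirror relations `ρ_{n+1} B_{n+1} = ρ_n P_n` and
`B_{n+1} ζ⁻_{n+1} = Q_{n+1}`, with `B_n = I − R_n − P_n ζ⁻_{n+1}`, show in the same way that both
currents equal `±(ρ_{n+1} Q_{n+1} 𝔪_n − ρ_n P_n 𝔪_{n+1})`.
-/

open Matrix

section

variable {ι α : Type*} [Fintype ι] [CommRing α]

theorem dotProduct_sub_mulVec_of_vecMul_eq {A P ζ : Matrix ι ι α} {u w : ι → α}
    (hu : u ᵥ* A = w) (hζ : A * ζ = P) (x y : ι → α) :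
    w ⬝ᵥ (x - ζ *ᵥ y) = w ⬝ᵥ x - u ᵥ* P ⬝ᵥ y := by
  subst hu
  rw [dotProduct_sub, ← dotProduct_mulVec u A (ζ *ᵥ y), mulVec_mulVec, hζ, dotProduct_mulVec]

def current (ρ 𝔪 : ℤ → ι → α) (Q ζ : ℤ → Matrix ι ι α) (n : ℤ) : α :=
  ρ (n + 1) ᵥ* Q (n + 1) ⬝ᵥ (𝔪 n - ζ n *ᵥ 𝔪 (n + 1))

variable [DecidableEq ι]

theorem vecMul_eq_of_eq_vecMul_mul_nonsing_inv {A Q : Matrix ι ι α} (hA : IsUnit A)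
    {u v : ι → α} (h : u = v ᵥ* (Q * A⁻¹)) : u ᵥ* A = v ᵥ* Q := by
  rw [h, vecMul_vecMul, nonsing_inv_mul_cancel_right A Q ((isUnit_iff_isUnit_det A).mp hA)]

theorem mul_eq_of_eq_nonsing_inv_mul {A P ζ : Matrix ι ι α} (hA : IsUnit A)
    (h : ζ = A⁻¹ * P) : A * ζ = P := by
  rw [h, mul_nonsing_inv_cancel_left A P ((isUnit_iff_isUnit_det A).mp hA)]

theorem current_sub_one {P Q R ζ : ℤ → Matrix ι ι α} {ρ 𝔪 : ℤ → ι → α} {n : ℤ}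
    (hρ : ρ n ᵥ* (1 - R n - Q n * ζ (n - 1)) = ρ (n + 1) ᵥ* Q (n + 1))
    (hζ : (1 - R n - Q n * ζ (n - 1)) * ζ n = P n)
    (h𝔪 : 𝔪 n = P n *ᵥ 𝔪 (n + 1) + R n *ᵥ 𝔪 n + Q n *ᵥ 𝔪 (n - 1)) :
    current ρ 𝔪 Q ζ (n - 1) = current ρ 𝔪 Q ζ n := by
  have harmonic : (1 - R n - Q n * ζ (n - 1)) *ᵥ 𝔪 n
      = P n *ᵥ 𝔪 (n + 1) + Q n *ᵥ (𝔪 (n - 1) - ζ (n - 1) *ᵥ 𝔪 n) := by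
    simp only [sub_mulVec, one_mulVec, mulVec_sub, ← mulVec_mulVec]
    nth_rewrite 1 [h𝔪]
    abel
  rw [current, current, sub_add_cancel, dotProduct_sub_mulVec_of_vecMul_eq hρ hζ, ← hρ,
    ← dotProduct_mulVec (ρ n) _ (𝔪 n), harmonic, dotProduct_add, dotProduct_mulVec,
    dotProduct_mulVec, add_sub_cancel_left]

end

theorem current_is_constant_general (m : ℕ)
    (P Q R ζ ζm : ℤ → Matrix (Fin m) (Fin m) ℝ)
    (hζinv : ∀ n : ℤ, IsUnit (1 - R n - Q n * ζ (n - 1)))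
    (hζ : ∀ n : ℤ, ζ n = (1 - R n - Q n * ζ (n - 1))⁻¹ * P n)
    (hζminv : ∀ n : ℤ, IsUnit (1 - R n - P n * ζm (n + 1)))
    (hζm : ∀ n : ℤ, ζm n = (1 - R n - P n * ζm (n + 1))⁻¹ * Q n)
    (𝔪 : ℤ → Fin m → ℝ)
    (hmart : ∀ n : ℤ,
      𝔪 n = (P n).mulVec (𝔪 (n + 1)) + (R n).mulVec (𝔪 n) + (Q n).mulVec (𝔪 (n - 1)))
    (ρ : ℤ → Fin m → ℝ)
    (hρα : ∀ n : ℤ,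
      ρ n = Matrix.vecMul (ρ (n + 1)) (Q (n + 1) * (1 - R n - Q n * ζ (n - 1))⁻¹))
    (hραm : ∀ n : ℤ,
      ρ (n + 1) = Matrix.vecMul (ρ n)
        (P n * (1 - R (n + 1) - P (n + 1) * ζm (n + 2))⁻¹)) :
    ∃ c : ℝ, ∀ n : ℤ,
      (∑ i, Matrix.vecMul (ρ (n + 1)) (Q (n + 1)) i *
          (𝔪 n - (ζ n).mulVec (𝔪 (n + 1))) i) = c ∧
      (∑ i, Matrix.vecMul (ρ n) (P n) i *
          (𝔪 (n + 1) - (ζm (n + 1)).mulVec (𝔪 n)) i) = -c := by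
  have hA n := vecMul_eq_of_eq_vecMul_mul_nonsing_inv (hζinv n) (hρα n)
  have hAζ n := mul_eq_of_eq_nonsing_inv_mul (hζinv n) (hζ n)
  have hB n : ρ (n + 1) ᵥ* (1 - R (n + 1) - P (n + 1) * ζm (n + 1 + 1)) = ρ n ᵥ* P n :=
    vecMul_eq_of_eq_vecMul_mul_nonsing_inv (hζminv (n + 1)) (by rw [add_assoc]; exact hραm n)
  have hBζ n := mul_eq_of_eq_nonsing_inv_mul (hζminv (n + 1)) (hζm (n + 1))
  have hperiodic : Function.Periodic (current ρ 𝔪 Q ζ) 1 := fun n => by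
    simpa using (current_sub_one (hA (n + 1)) (hAζ (n + 1)) (hmart (n + 1))).symm
  have hconst n : current ρ 𝔪 Q ζ n = current ρ 𝔪 Q ζ 0 := by
    simpa using hperiodic.int_mul_eq n
  refine ⟨current ρ 𝔪 Q ζ 0, fun n => ⟨hconst n, ?_⟩⟩
  calc ρ n ᵥ* P n ⬝ᵥ (𝔪 (n + 1) - ζm (n + 1) *ᵥ 𝔪 n)
      = ρ n ᵥ* P n ⬝ᵥ 𝔪 (n + 1) - ρ (n + 1) ᵥ* Q (n + 1) ⬝ᵥ 𝔪 n :=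
        dotProduct_sub_mulVec_of_vecMul_eq (hB n) (hBζ n) _ _
    _ = -current ρ 𝔪 Q ζ n := by
        rw [current, dotProduct_sub_mulVec_of_vecMul_eq (hA n) (hAζ n), neg_sub]
    _ = _ := by rw [hconst]

/-- the "current" `ρ_{n+1} Q_{n+1} (𝔪_n − ζ_n 𝔪_{n+1})` is a constant `c`
independent of `n`, and `ρ_n P_n (𝔪_{n+1} − ζ⁻_{n+1} 𝔪_n) = −c` (Lemma 4.1). -/
theorem current_is_constant (m : ℕ) (hm : 1 ≤ m)
    (P Q R ζ ζm : ℤ → Matrix (Fin m) (Fin m) ℝ)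
    (hζinv : ∀ n : ℤ, IsUnit (1 - R n - Q n * ζ (n - 1)))
    (hζ : ∀ n : ℤ, ζ n = (1 - R n - Q n * ζ (n - 1))⁻¹ * P n)
    (hζminv : ∀ n : ℤ, IsUnit (1 - R n - P n * ζm (n + 1)))
    (hζm : ∀ n : ℤ, ζm n = (1 - R n - P n * ζm (n + 1))⁻¹ * Q n)
    (𝔪 : ℤ → Fin m → ℝ)
    (hmart : ∀ n : ℤ,
      𝔪 n = (P n).mulVec (𝔪 (n + 1)) + (R n).mulVec (𝔪 n) + (Q n).mulVec (𝔪 (n - 1)))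
    (ρ : ℤ → Fin m → ℝ)
    (hρ : ∀ n : ℤ,
      ρ n = Matrix.vecMul (ρ (n - 1)) (P (n - 1)) + Matrix.vecMul (ρ n) (R n)
          + Matrix.vecMul (ρ (n + 1)) (Q (n + 1)))
    (hρα : ∀ n : ℤ,
      ρ n = Matrix.vecMul (ρ (n + 1)) (Q (n + 1) * (1 - R n - Q n * ζ (n - 1))⁻¹))
    (hραm : ∀ n : ℤ,
      ρ (n + 1) = Matrix.vecMul (ρ n)
        (P n * (1 - R (n + 1) - P (n + 1) * ζm (n + 2))⁻¹)) :
    ∃ c : ℝ, ∀ n : ℤ,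
      (∑ i, Matrix.vecMul (ρ (n + 1)) (Q (n + 1)) i *
          (𝔪 n - (ζ n).mulVec (𝔪 (n + 1))) i) = c ∧
      (∑ i, Matrix.vecMul (ρ n) (P n) i *
          (𝔪 (n + 1) - (ζm (n + 1)).mulVec (𝔪 n)) i) = -c :=
  current_is_constant_general m P Q R ζ ζm hζinv hζ hζminv hζm 𝔪 hmart ρ hρα hραm
end

section
/- Fix an integer m ≥ 1, ε̄ > 0 and K > 0. Let (ζ_n)_{n∈ℤ} be row-stochastic m×m matrices with ζ_n(i,j) ≥ ε̄ for all n, i, j, and let (𝔪_n)_{n∈ℤ} be column vectors in ℝ^m satisfying 𝔪_n = ζ_n 𝔪_{n+1} for all n ∈ ℤ and the bounded-increments condition |𝔪_{n'}(i') − 𝔪_{n''}(i'')| ≤ K whenever |n' − n''| ≤ 1. Then there exists c ∈ ℝ such that 𝔪_n = c·𝟏 for all n ∈ ℤ, where 𝟏 is the all-ones vector. -/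
/-!
Two rows of a row-stochastic matrix with entries `≥ ε` share mass at least `ε` on every coordinate,
so measuring `v` from its minimum, `(ζ v) i - (ζ v) i'` is at most `1 - m ε` times the spread
`max v - min v`. Iterating `𝔪ₙ = ζₙ 𝔪ₙ₊₁`, the spread of `𝔪ₙ` is at most `(1 - m ε)ᵏ K` for every
`k`, hence zero; and a row-stochastic matrix fixes constant vectors, so the constant does not
depend on `n` either.
-/

open Finset Filter Topology Matrix

section RowStochastic

variable {ι : Type*} [Fintype ι] {A : Matrix ι ι ℝ} {ε : ℝ}

lemma mulVec_apply_sub_mulVec_apply_eq (hrow : ∀ i, ∑ j, A i j = 1) (v : ι → ℝ) (c : ℝ)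
    (i i' : ι) :
    (A *ᵥ v) i - (A *ᵥ v) i' = ∑ j, (A i j - A i' j) * (v j - c) := by
  simp only [mulVec, dotProduct, sub_mul, mul_sub, sum_sub_distrib, ← sum_mul, hrow]
  ring

lemma card_mul_le_one_of_le_apply (hpos : ∀ i j, ε ≤ A i j) (hrow : ∀ i, ∑ j, A i j = 1)
    (i : ι) : Fintype.card ι * ε ≤ 1 := by
  simpa [hrow i] using sum_le_sum fun j (_ : j ∈ univ) ↦ hpos i j

lemma mulVec_apply_sub_mulVec_apply_le (hpos : ∀ i j, ε ≤ A i j) (hrow : ∀ i, ∑ j, A i j = 1)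
    {v : ι → ℝ} {B : ℝ} (hv : ∀ j j', v j - v j' ≤ B) (i i' : ι) :
    (A *ᵥ v) i - (A *ᵥ v) i' ≤ (1 - Fintype.card ι * ε) * B := by
  obtain ⟨j₀, -, hj₀⟩ := exists_min_image univ v ⟨i, mem_univ i⟩
  calc (A *ᵥ v) i - (A *ᵥ v) i' = ∑ j, (A i j - A i' j) * (v j - v j₀) :=
        mulVec_apply_sub_mulVec_apply_eq hrow v _ i i'
    _ ≤ ∑ j, (A i j - ε) * B := by
        refine sum_le_sum fun j _ ↦ ?_
        calc (A i j - A i' j) * (v j - v j₀) ≤ (A i j - ε) * (v j - v j₀) := by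
              gcongr
              · exact sub_nonneg.2 (hj₀ j (mem_univ j))
              · exact hpos i' j
          _ ≤ (A i j - ε) * B := by
              gcongr
              · exact sub_nonneg.2 (hpos i j)
              · exact hv j j₀
    _ = (1 - Fintype.card ι * ε) * B := by
        simp [← sum_mul, sum_sub_distrib, hrow i]

lemma mulVec_const_of_sum_eq_one (hrow : ∀ i, ∑ j, A i j = 1) (c : ℝ) :
    A *ᵥ (fun _ ↦ c) = fun _ ↦ c := by
  ext i
  simp [mulVec, dotProduct, ← sum_mul, hrow i]

end RowStochastic

section BackwardRecursion

variable {ι : Type*} [Fintype ι] {ζ : ℤ → Matrix ι ι ℝ} {ε K : ℝ} {𝔪 : ℤ → ι → ℝ}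

lemma apply_sub_apply_le_pow_mul (hpos : ∀ n i j, ε ≤ ζ n i j)
    (hrow : ∀ n i, ∑ j, ζ n i j = 1) (hrec : ∀ n, 𝔪 n = ζ n *ᵥ 𝔪 (n + 1))
    (hK : ∀ n i i', 𝔪 n i - 𝔪 n i' ≤ K) (k : ℕ) (n : ℤ) (i i' : ι) :
    𝔪 n i - 𝔪 n i' ≤ (1 - Fintype.card ι * ε) ^ k * K := by
  induction k generalizing n i i' with
  | zero => simpa using hK n i i'
  | succ k ih =>
    rw [hrec n, pow_succ', mul_assoc]
    exact mulVec_apply_sub_mulVec_apply_le (hpos n) (hrow n) (ih (n + 1)) i i'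

lemma apply_eq_apply_of_backward_recursion (hε : 0 < ε) (hpos : ∀ n i j, ε ≤ ζ n i j)
    (hrow : ∀ n i, ∑ j, ζ n i j = 1) (hrec : ∀ n, 𝔪 n = ζ n *ᵥ 𝔪 (n + 1))
    (hK : ∀ n i i', 𝔪 n i - 𝔪 n i' ≤ K) (n : ℤ) (i i' : ι) : 𝔪 n i = 𝔪 n i' := by
  have hcard : (0 : ℝ) < Fintype.card ι := by
    exact_mod_cast Fintype.card_pos_iff.2 ⟨i⟩
  have hr₀ : 0 ≤ 1 - Fintype.card ι * ε :=
    sub_nonneg.2 (card_mul_le_one_of_le_apply (hpos 0) (hrow 0) i)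
  have hr₁ : 1 - Fintype.card ι * ε < 1 := by nlinarith
  have hlim : Tendsto (fun k : ℕ ↦ (1 - Fintype.card ι * ε) ^ k * K) atTop (𝓝 0) := by
    simpa using (tendsto_pow_atTop_nhds_zero_of_lt_one hr₀ hr₁).mul_const K
  have hbound (j j' : ι) : 𝔪 n j - 𝔪 n j' ≤ 0 :=
    ge_of_tendsto' hlim fun k ↦ apply_sub_apply_le_pow_mul hpos hrow hrec hK k n j j'
  linarith [hbound i i', hbound i' i]

end BackwardRecursion

theorem trivial_martingale_is_constant_general (m : ℕ) (hm : 1 ≤ m) (εbar K : ℝ)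
    (hε : 0 < εbar)
    (ζ : ℤ → Matrix (Fin m) (Fin m) ℝ)
    (hζ_pos : ∀ (n : ℤ) (i j : Fin m), εbar ≤ ζ n i j)
    (hζ_rowsum : ∀ (n : ℤ) (i : Fin m), ∑ j, ζ n i j = 1)
    (𝔪 : ℤ → Fin m → ℝ)
    (hrec : ∀ n : ℤ, 𝔪 n = (ζ n).mulVec (𝔪 (n + 1)))
    (hinc : ∀ (n' n'' : ℤ) (i' i'' : Fin m), |n' - n''| ≤ 1 →
      |𝔪 n' i' - 𝔪 n'' i''| ≤ K) :
    ∃ c : ℝ, ∀ (n : ℤ) (i : Fin m), 𝔪 n i = c := by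
  let i₀ : Fin m := ⟨0, hm⟩
  have hconst (n : ℤ) : 𝔪 n = fun _ ↦ 𝔪 n i₀ := funext fun i ↦
    apply_eq_apply_of_backward_recursion hε hζ_pos hζ_rowsum hrec
      (fun n i i' ↦ (abs_le.1 (hinc n n i i' (by simp))).2) n i i₀
  have hperiodic : Function.Periodic (fun n ↦ 𝔪 n i₀) 1 := fun n ↦ by
    show 𝔪 (n + 1) i₀ = 𝔪 n i₀
    rw [hrec n, hconst (n + 1), mulVec_const_of_sum_eq_one (hζ_rowsum n)]
  exact ⟨𝔪 0 i₀, fun n i ↦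
    (congrFun (hconst n) i).trans (by simpa using hperiodic.int_mul_eq n)⟩

/-- if `𝔪_n = ζ_n 𝔪_{n+1}` for uniformly elliptic row-stochastic
matrices `ζ_n` and `𝔪` has bounded increments, then `𝔪` is constant
(case (1) after Lemma 4.2). -/
theorem trivial_martingale_is_constant (m : ℕ) (hm : 1 ≤ m) (εbar K : ℝ)
    (hε : 0 < εbar) (hK : 0 < K)
    (ζ : ℤ → Matrix (Fin m) (Fin m) ℝ)
    (hζ_pos : ∀ (n : ℤ) (i j : Fin m), εbar ≤ ζ n i j)
    (hζ_rowsum : ∀ (n : ℤ) (i : Fin m), ∑ j, ζ n i j = 1)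
    (𝔪 : ℤ → Fin m → ℝ)
    (hrec : ∀ n : ℤ, 𝔪 n = (ζ n).mulVec (𝔪 (n + 1)))
    (hinc : ∀ (n' n'' : ℤ) (i' i'' : Fin m), |n' - n''| ≤ 1 →
      |𝔪 n' i' - 𝔪 n'' i''| ≤ K) :
    ∃ c : ℝ, ∀ (n : ℤ) (i : Fin m), 𝔪 n i = c :=
  trivial_martingale_is_constant_general m hm εbar K hε ζ hζ_pos hζ_rowsum 𝔪 hrec hinc
end
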